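/- arXiv:2510.00901 — 4 statements merged into one kernel-verified Lean document; each statement's English description precedes it below -/
import Mathlib

section
/- Let R be a ring with identity, a ∈ R and j_a ∈ J(R). Then a + j_a is strongly clean if and only if there exist an idempotent e ∈ R and a unit u ∈ R with a = (1 − e) + u such that the inverse a^{‖e} of a along e exists and a·a^{‖e}·(a + j_a)·(1 − a·a^{‖e}) = 0 and (1 − a^{‖e}·a)·(a + j_a)·a^{‖e}·a = 0. -/
/-- `y` is the (b,c)-inverse of `a`: `c*a*y = c`, `y*a*b = b`, `y ∈ bR ∩ Rc`. -/
def IsBCInverse {R : Type*} [Ring R] (a b c y : R) : Prop :=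
  c * a * y = c ∧ y * a * b = b ∧ (∃ s, y = b * s) ∧ (∃ t, y = t * c)



private lemma leftinv_one_sub_jac {R : Type*} [Ring R] {j : R}
    (hj : j ∈ Ideal.jacobson (⊥ : Ideal R)) : ∃ c : R, c * (1 - j) = 1 := by
  obtain ⟨z, hz⟩ := Ideal.mem_jacobson_iff.mp hj (-1)
  rw [Ideal.mem_bot] at hz
  refine ⟨z, ?_⟩
  have : z * (1 - j) = z * -1 * j + z - 1 + 1 := by noncomm_ring
  rw [this, hz, zero_add]

private lemma isUnit_one_sub_jac {R : Type*} [Ring R] {j : R}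
    (hj : j ∈ Ideal.jacobson (⊥ : Ideal R)) : IsUnit (1 - j) := by
  obtain ⟨c, hc⟩ := leftinv_one_sub_jac hj
  have hcj : -(c * j) ∈ Ideal.jacobson (⊥ : Ideal R) :=
    neg_mem (Ideal.mul_mem_left _ c hj)
  obtain ⟨d, hd⟩ := leftinv_one_sub_jac hcj
  have hc' : (1 : R) + c * j = c := by rw [← hc]; noncomm_ring
  have hdc : d * c = 1 := by
    rw [← hc']
    calc d * (1 + c * j) = d * (1 - -(c * j)) := by noncomm_ring
    _ = 1 := hd
  have h1 : d = 1 - j := by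
    calc d = d * (c * (1 - j)) := by rw [hc, mul_one]
    _ = d * c * (1 - j) := by noncomm_ring
    _ = 1 - j := by rw [hdc, one_mul]
  exact ⟨⟨1 - j, c, by rw [← h1]; exact hdc, hc⟩, rfl⟩

private lemma isUnit_one_sub_swap {R : Type*} [Ring R] {x z : R}
    (h : IsUnit (1 - z * x)) : IsUnit (1 - x * z) := by
  obtain ⟨w, hw⟩ := h
  have h1 : (1 - z * x) * ↑w⁻¹ = 1 := by rw [← hw]; exact w.mul_inv
  have h2 : (↑w⁻¹ : R) * (1 - z * x) = 1 := by rw [← hw]; exact w.inv_mul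
  refine ⟨⟨1 - x * z, 1 + x * ↑w⁻¹ * z, ?_, ?_⟩, rfl⟩
  · have e1 : (1 - x * z) * (1 + x * ↑w⁻¹ * z)
        = 1 + x * ((1 - z * x) * ↑w⁻¹) * z - x * z := by noncomm_ring
    rw [e1, h1]; noncomm_ring
  · have e2 : (1 + x * ↑w⁻¹ * z) * (1 - x * z)
        = 1 + x * (↑w⁻¹ * (1 - z * x)) * z - x * z := by noncomm_ring
    rw [e2, h2]; noncomm_ring

/-- for `j_a` in the Jacobson radical, `a + j_a` is strongly clean iff
there are an idempotent `e` and a unit `u` with `a = (1 - e) + u` such that the inverse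
`a^{‖e}` of `a` along `e` (i.e. the `(e,e)`-inverse of `a`) exists and
`a a^{‖e} (a + j_a)(1 - a a^{‖e}) = 0` and `(1 - a^{‖e} a)(a + j_a) a^{‖e} a = 0`. -/
theorem stmt14 {R : Type*} [Ring R] (a ja : R)
    (hja : ja ∈ Ideal.jacobson (⊥ : Ideal R)) :
    (∃ e u : R, IsIdempotentElem e ∧ IsUnit u ∧ a + ja = e + u ∧
        e * (a + ja) = (a + ja) * e) ↔
    (∃ e u : R, IsIdempotentElem e ∧ IsUnit u ∧ a = (1 - e) + u ∧
        ∃ y, IsBCInverse a e e y ∧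
          a * y * (a + ja) * (1 - a * y) = 0 ∧
          (1 - y * a) * (a + ja) * (y * a) = 0) := by
  constructor
  · rintro ⟨f, u, hf, hu, hb, hcomm⟩
    obtain ⟨U, hU⟩ := hu
    set ui : R := ↑U⁻¹ with hui_def
    have hui1 : u * ui = 1 := by rw [hui_def, ← hU]; exact U.mul_inv
    have hui2 : ui * u = 1 := by rw [hui_def, ← hU]; exact U.inv_mul
    set e : R := 1 - f with he_def
    have hfu : f = 1 - e := by rw [he_def]; noncomm_ring
    have hee : e * e = e := by
      rw [he_def]
      calc (1 - f) * (1 - f) = 1 - f - (f - f * f) := by noncomm_ring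
      _ = 1 - f - (f - f) := by rw [hf.eq]
      _ = 1 - f := by noncomm_ring
    have heb : e * (a + ja) = (a + ja) * e := by
      rw [he_def]
      calc (1 - f) * (a + ja) = (a + ja) - f * (a + ja) := by noncomm_ring
      _ = (a + ja) - (a + ja) * f := by rw [hcomm]
      _ = (a + ja) * (1 - f) := by noncomm_ring
    have heu : e * u = u * e := by
      have h := heb
      rw [hb, hfu] at h
      calc e * u = e * (1 - e + u) - (e - e * e) := by noncomm_ring
      _ = (1 - e + u) * e - (e - e * e) := by rw [h]
      _ = u * e := by noncomm_ring
    have huie : e * ui = ui * e := by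
      calc e * ui = ui * (u * e) * ui := by rw [← mul_assoc ui u e, hui2, one_mul]
      _ = ui * (e * u) * ui := by rw [heu]
      _ = ui * e := by rw [mul_assoc ui (e * u) ui, mul_assoc e u ui, hui1, mul_one]
    have hA : a = 1 - e + (u - ja) := by
      have h := hb
      rw [hfu] at h
      have h2 : a = 1 - e + u - ja := by rw [← h]; noncomm_ring
      rw [h2]; noncomm_ring
    -- the unit for the factorization
    have hm : IsUnit (1 - e * ja * (e * ui)) := by
      apply isUnit_one_sub_swap (x := e * ja) (z := e * ui)
      have h := isUnit_one_sub_jac (Ideal.mul_mem_left _ (e * ui * e) hja)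
      have hr : (1 : R) - e * ui * (e * ja) = 1 - e * ui * e * ja := by noncomm_ring
      rw [hr]; exact h
    obtain ⟨T, hT⟩ := hm
    set t : R := ↑T⁻¹ with ht_def
    have ht1 : (1 - e * ja * (e * ui)) * t = 1 := by rw [ht_def, ← hT]; exact T.mul_inv
    have ht2 : t * (1 - e * ja * (e * ui)) = 1 := by rw [ht_def, ← hT]; exact T.inv_mul
    have hcm : e * (1 - e * ja * (e * ui)) = (1 - e * ja * (e * ui)) * e := by
      have hem : e * (e * ja * (e * ui)) = e * ja * (e * ui) := by
        calc e * (e * ja * (e * ui)) = (e * e) * (ja * (e * ui)) := by noncomm_ring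
        _ = e * (ja * (e * ui)) := by rw [hee]
        _ = e * ja * (e * ui) := by noncomm_ring
      have hme : (e * ja * (e * ui)) * e = e * ja * (e * ui) := by
        calc (e * ja * (e * ui)) * e = e * ja * (e * (ui * e)) := by noncomm_ring
        _ = e * ja * (e * (e * ui)) := by rw [← huie]
        _ = e * ja * ((e * e) * ui) := by noncomm_ring
        _ = e * ja * (e * ui) := by rw [hee]
      calc e * (1 - e * ja * (e * ui)) = e - e * (e * ja * (e * ui)) := by noncomm_ring
      _ = e - e * ja * (e * ui) := by rw [hem]
      _ = e - (e * ja * (e * ui)) * e := by rw [hme]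
      _ = (1 - e * ja * (e * ui)) * e := by noncomm_ring
    have hte : e * t = t * e := by
      calc e * t = t * (1 - e * ja * (e * ui)) * e * t := by rw [ht2, one_mul]
      _ = t * ((1 - e * ja * (e * ui)) * e) * t := by rw [mul_assoc t _ e]
      _ = t * (e * (1 - e * ja * (e * ui))) * t := by rw [← hcm]
      _ = t * (e * ((1 - e * ja * (e * ui)) * t)) := by noncomm_ring
      _ = t * (e * 1) := by rw [ht1]
      _ = t * e := by rw [mul_one]
    have heae : e * a * e = (1 - e * ja * (e * ui)) * (u * e) := by
      have hL : e * a * e = u * e - e * ja * e := by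
        rw [hA]
        calc e * (1 - e + (u - ja)) * e
            = (e * e - (e * e) * e) + ((e * u) * e - e * ja * e) := by noncomm_ring
        _ = (e * e - (e * e) * e) + ((u * e) * e - e * ja * e) := by rw [heu]
        _ = (e * e - (e * e) * e) + (u * (e * e) - e * ja * e) := by
              rw [mul_assoc u e e]
        _ = u * e - e * ja * e := by rw [hee, hee]; noncomm_ring
      have hR : (1 - e * ja * (e * ui)) * (u * e) = u * e - e * ja * e := by
        calc (1 - e * ja * (e * ui)) * (u * e)
            = u * e - e * ja * (e * ((ui * u) * e)) := by noncomm_ring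
        _ = u * e - e * ja * (e * (1 * e)) := by rw [hui2]
        _ = u * e - e * ja * (e * e) := by rw [one_mul]
        _ = u * e - e * ja * e := by rw [hee]
      rw [hL, hR]
    have heay : e * a * (e * (ui * (t * e))) = e := by
      calc e * a * (e * (ui * (t * e)))
          = (e * a * e) * (ui * (t * e)) := by noncomm_ring
      _ = ((1 - e * ja * (e * ui)) * (u * e)) * (ui * (t * e)) := by rw [heae]
      _ = (1 - e * ja * (e * ui)) * (u * ((e * ui) * (t * e))) := by noncomm_ring
      _ = (1 - e * ja * (e * ui)) * (u * ((ui * e) * (t * e))) := by rw [huie]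
      _ = (1 - e * ja * (e * ui)) * ((u * ui) * (e * (t * e))) := by noncomm_ring
      _ = (1 - e * ja * (e * ui)) * (1 * (e * (t * e))) := by rw [hui1]
      _ = (1 - e * ja * (e * ui)) * ((e * t) * e) := by noncomm_ring
      _ = (1 - e * ja * (e * ui)) * ((t * e) * e) := by rw [hte]
      _ = (1 - e * ja * (e * ui)) * (t * (e * e)) := by noncomm_ring
      _ = (1 - e * ja * (e * ui)) * (t * e) := by rw [hee]
      _ = ((1 - e * ja * (e * ui)) * t) * e := by noncomm_ring
      _ = 1 * e := by rw [ht1]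
      _ = e := one_mul e
    have hyae : e * (ui * (t * e)) * a * e = e := by
      calc e * (ui * (t * e)) * a * e
          = e * (ui * (t * (e * a * e))) := by noncomm_ring
      _ = e * (ui * (t * ((1 - e * ja * (e * ui)) * (u * e)))) := by rw [heae]
      _ = e * (ui * ((t * (1 - e * ja * (e * ui))) * (u * e))) := by noncomm_ring
      _ = e * (ui * (1 * (u * e))) := by rw [ht2]
      _ = e * ((ui * u) * e) := by noncomm_ring
      _ = e * (1 * e) := by rw [hui2]
      _ = e * e := by rw [one_mul]
      _ = e := hee
    have huja : IsUnit (u - ja) := by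
      have h1 : IsUnit (1 - ui * ja) := isUnit_one_sub_jac (Ideal.mul_mem_left _ ui hja)
      have h2 : u - ja = u * (1 - ui * ja) := by
        calc u - ja = u - 1 * ja := by rw [one_mul]
        _ = u - (u * ui) * ja := by rw [hui1]
        _ = u * (1 - ui * ja) := by noncomm_ring
      rw [h2]
      exact (hU ▸ U.isUnit).mul h1
    refine ⟨e, u - ja, hee, huja, hA, e * (ui * (t * e)),
      ⟨heay, hyae, ⟨ui * (t * e), rfl⟩, ⟨e * (ui * t), by noncomm_ring⟩⟩, ?_, ?_⟩
    · calc a * (e * (ui * (t * e))) * (a + ja) * (1 - a * (e * (ui * (t * e))))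
          = (a * (e * (ui * t))) * ((e * (a + ja)) * (1 - a * (e * (ui * (t * e))))) := by
            noncomm_ring
      _ = (a * (e * (ui * t))) * (((a + ja) * e) * (1 - a * (e * (ui * (t * e))))) := by
            rw [heb]
      _ = (a * (e * (ui * t))) * ((a + ja) * (e - e * a * (e * (ui * (t * e))))) := by
            noncomm_ring
      _ = (a * (e * (ui * t))) * ((a + ja) * (e - e)) := by rw [heay]
      _ = 0 := by noncomm_ring
    · calc (1 - e * (ui * (t * e)) * a) * (a + ja) * (e * (ui * (t * e)) * a)
          = (1 - e * (ui * (t * e)) * a) * (((a + ja) * e) * (ui * (t * (e * a)))) := by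
            noncomm_ring
      _ = (1 - e * (ui * (t * e)) * a) * ((e * (a + ja)) * (ui * (t * (e * a)))) := by
            rw [← heb]
      _ = (e - e * (ui * (t * e)) * a * e) * ((a + ja) * (ui * (t * (e * a)))) := by
            noncomm_ring
      _ = (e - e) * ((a + ja) * (ui * (t * (e * a)))) := by rw [hyae]
      _ = 0 := by noncomm_ring
  · rintro ⟨e, u, he, hu, ha, y, ⟨h1, h2, ⟨s, hs⟩, ⟨t, ht⟩⟩, c1, c2⟩
    obtain ⟨U, hU⟩ := hu
    set ui : R := ↑U⁻¹ with hui_def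
    have hui1 : u * ui = 1 := by rw [hui_def, ← hU]; exact U.mul_inv
    have hee : e * e = e := he.eq
    have hye : y * e = y := by rw [ht, mul_assoc, hee]
    have hey : e * y = y := by rw [hs, ← mul_assoc, hee]
    have hep : e * (a * y) = e := by rw [← mul_assoc]; exact h1
    have hpe : a * y * e = a * y := by rw [mul_assoc, hye]
    have k1 : e * (a + ja) * (1 - e) = 0 := by
      have hq : (1 - a * y) * (1 - e) = 1 - e := by
        calc (1 - a * y) * (1 - e) = 1 - e - (a * y - a * y * e) := by noncomm_ring
        _ = 1 - e - (a * y - a * y) := by rw [hpe]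
        _ = 1 - e := by noncomm_ring
      calc e * (a + ja) * (1 - e)
          = (e * (a * y)) * ((a + ja) * ((1 - a * y) * (1 - e))) := by
            rw [hep, hq]; noncomm_ring
      _ = e * ((a * y * (a + ja) * (1 - a * y)) * (1 - e)) := by noncomm_ring
      _ = 0 := by rw [c1, zero_mul, mul_zero]
    have heq : e * (y * a) = y * a := by rw [← mul_assoc, hey]
    have k2 : (1 - e) * (a + ja) * e = 0 := by
      have hr : (1 - e) * (1 - y * a) = 1 - e := by
        calc (1 - e) * (1 - y * a) = 1 - e - (y * a - e * (y * a)) := by noncomm_ring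
        _ = 1 - e - (y * a - y * a) := by rw [heq]
        _ = 1 - e := by noncomm_ring
      calc (1 - e) * (a + ja) * e
          = ((1 - e) * (1 - y * a)) * ((a + ja) * (y * a * e)) := by
            rw [hr, h2]; noncomm_ring
      _ = (1 - e) * (((1 - y * a) * (a + ja) * (y * a)) * e) := by noncomm_ring
      _ = 0 := by rw [c2, zero_mul, mul_zero]
    have heb : e * (a + ja) = (a + ja) * e := by
      have hid : e * (a + ja) - (a + ja) * e
          = e * (a + ja) * (1 - e) - (1 - e) * (a + ja) * e := by noncomm_ring
      rw [k1, k2, sub_zero] at hid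
      exact sub_eq_zero.mp hid
    refine ⟨1 - e, u + ja, he.one_sub, ?_, ?_, ?_⟩
    · have h1u : IsUnit (1 + ui * ja) := by
        have h := isUnit_one_sub_jac (neg_mem (Ideal.mul_mem_left _ ui hja))
        have hr : (1 : R) - -(ui * ja) = 1 + ui * ja := by noncomm_ring
        rwa [hr] at h
      have h2 : u + ja = u * (1 + ui * ja) := by
        calc u + ja = u + 1 * ja := by rw [one_mul]
        _ = u + (u * ui) * ja := by rw [hui1]
        _ = u * (1 + ui * ja) := by noncomm_ring
      rw [h2]
      exact (hU ▸ U.isUnit).mul h1u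
    · rw [ha]; noncomm_ring
    · calc (1 - e) * (a + ja) = (a + ja) - e * (a + ja) := by noncomm_ring
      _ = (a + ja) - (a + ja) * e := by rw [heb]
      _ = (a + ja) * (1 - e) := by noncomm_ring
end

section
/- Let Â = A + εA₀ ∈ 𝔻^{m×n} be a dual matrix, where A is regular with reflexive inverse A⁺ ∈ ℝ^{n×m}. Then the following are equivalent: (1) Â is regular, i.e. Â·X̂·Â = Â for some X̂ ∈ 𝔻^{n×m}; (2) (I − A·A⁺)·A₀·(I − A⁺·A) = 0; (3) there exist real matrices A₁ ∈ ℝ^{m×m} and A₂ ∈ ℝ^{n×n} such that Â = (I + εA₁)·A·(I + εA₂). Moreover, if Â = (I + εA₁)·A·(I + εA₂) for real matrices A₁, A₂, then A₀ = A₁·A + A·A₂. -/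
open TrivSqZeroExt

/-- The dual matrix `A + ε A₀` over the dual numbers `𝔻 = ℝ[ε]`, `ε² = 0`. -/
def dualMat {m n : ℕ} (A A₀ : Matrix (Fin m) (Fin n) ℝ) :
    Matrix (Fin m) (Fin n) (DualNumber ℝ) :=
  A.map (fun r => TrivSqZeroExt.inl r) + A₀.map (fun r => TrivSqZeroExt.inr r)

lemma dualMat_mul {m n p : ℕ} (A A₀ : Matrix (Fin m) (Fin n) ℝ)
    (B B₀ : Matrix (Fin n) (Fin p) ℝ) :
    dualMat A A₀ * dualMat B B₀ = dualMat (A * B) (A * B₀ + A₀ * B) := by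
  ext i j
  · simp [dualMat, Matrix.mul_apply, fst_sum, fst_mul]
  · simp [dualMat, Matrix.mul_apply, snd_sum, snd_mul, Finset.sum_add_distrib, mul_comm]

lemma dualMat_inj {m n : ℕ} {A A₀ B B₀ : Matrix (Fin m) (Fin n) ℝ}
    (h : dualMat A A₀ = dualMat B B₀) : A = B ∧ A₀ = B₀ := by
  constructor <;> ext i j
  · have := congrArg (fun M => fst (M i j)) h
    simpa [dualMat] using this
  · have := congrArg (fun M => snd (M i j)) h
    simpa [dualMat] using this

lemma dualMat_decomp {m n : ℕ} (X : Matrix (Fin m) (Fin n) (DualNumber ℝ)) :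
    X = dualMat (X.map fst) (X.map snd) := by
  ext i j <;> simp [dualMat]

/-- for `Â = A + ε A₀` with `A` regular with reflexive inverse `A⁺`,
the following are equivalent: (1) `Â` is regular; (2) `(I - A A⁺) A₀ (I - A⁺ A) = 0`;
(3) `Â = (I + ε A₁) A (I + ε A₂)` for some real matrices `A₁, A₂`. Moreover if
`Â = (I + ε A₁) A (I + ε A₂)` then `A₀ = A₁ A + A A₂`. -/
theorem stmt16 {m n : ℕ}
    (A A₀ : Matrix (Fin m) (Fin n) ℝ) (Ap : Matrix (Fin n) (Fin m) ℝ)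
    (hAp : A * Ap * A = A ∧ Ap * A * Ap = Ap) :
    ((∃ Xh : Matrix (Fin n) (Fin m) (DualNumber ℝ),
        dualMat A A₀ * Xh * dualMat A A₀ = dualMat A A₀) ↔
      (1 - A * Ap) * A₀ * (1 - Ap * A) = 0) ∧
    ((∃ Xh : Matrix (Fin n) (Fin m) (DualNumber ℝ),
        dualMat A A₀ * Xh * dualMat A A₀ = dualMat A A₀) ↔
      (∃ (A₁ : Matrix (Fin m) (Fin m) ℝ) (A₂ : Matrix (Fin n) (Fin n) ℝ),
        dualMat A A₀ = dualMat 1 A₁ * dualMat A 0 * dualMat 1 A₂)) ∧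
    (∀ (A₁ : Matrix (Fin m) (Fin m) ℝ) (A₂ : Matrix (Fin n) (Fin n) ℝ),
      dualMat A A₀ = dualMat 1 A₁ * dualMat A 0 * dualMat 1 A₂ →
      A₀ = A₁ * A + A * A₂) := by
  obtain ⟨hA1, _⟩ := hAp
  have haux : ∀ (p : ℕ) (Y : Matrix (Fin n) (Fin p) ℝ),
      A * (Ap * (A * Y)) = A * Y := by
    intro p Y
    rw [← Matrix.mul_assoc, ← Matrix.mul_assoc, hA1]
  have h3 : A * (Ap * A) = A := by rw [← Matrix.mul_assoc, hA1]
  -- Moreover part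
  have hM : ∀ (A₁ : Matrix (Fin m) (Fin m) ℝ) (A₂ : Matrix (Fin n) (Fin n) ℝ),
      dualMat A A₀ = dualMat 1 A₁ * dualMat A 0 * dualMat 1 A₂ →
      A₀ = A₁ * A + A * A₂ := by
    intro A₁ A₂ hE
    rw [dualMat_mul, dualMat_mul] at hE
    have := (dualMat_inj hE).2
    simp only [Matrix.one_mul, Matrix.mul_one, Matrix.zero_mul, zero_add, add_zero] at this
    rw [this]; abel
  -- (1) → (2)
  have h12 : (∃ Xh : Matrix (Fin n) (Fin m) (DualNumber ℝ),
      dualMat A A₀ * Xh * dualMat A A₀ = dualMat A A₀) →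
      (1 - A * Ap) * A₀ * (1 - Ap * A) = 0 := by
    rintro ⟨Xh, hXh⟩
    rw [dualMat_decomp Xh] at hXh
    set X := Xh.map fst with hX
    set X₀ := Xh.map snd with hX0
    rw [dualMat_mul, dualMat_mul] at hXh
    obtain ⟨e1, e2⟩ := dualMat_inj hXh
    rw [← e2]
    simp only [Matrix.mul_add, Matrix.add_mul, Matrix.sub_mul, Matrix.mul_sub, Matrix.one_mul, Matrix.mul_one, Matrix.mul_assoc, haux, h3]
    abel
  -- (2) → (3)
  have h23 : (1 - A * Ap) * A₀ * (1 - Ap * A) = 0 →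
      (∃ (A₁ : Matrix (Fin m) (Fin m) ℝ) (A₂ : Matrix (Fin n) (Fin n) ℝ),
        dualMat A A₀ = dualMat 1 A₁ * dualMat A 0 * dualMat 1 A₂) := by
    intro h2
    refine ⟨A₀ * Ap, Ap * A₀ - Ap * (A₀ * (Ap * A)), ?_⟩
    rw [dualMat_mul, dualMat_mul]
    simp only [Matrix.one_mul, Matrix.mul_one, Matrix.mul_zero, Matrix.zero_mul, zero_add, add_zero]
    have e2 : A₀ = A * (Ap * A₀ - Ap * (A₀ * (Ap * A))) + A₀ * Ap * A := by
      simp only [Matrix.sub_mul, Matrix.mul_sub, Matrix.one_mul, Matrix.mul_one, Matrix.mul_assoc] at h2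
      rw [← sub_eq_zero]
      rw [← h2]
      simp only [Matrix.mul_sub, Matrix.mul_add, Matrix.add_mul, Matrix.mul_assoc]
      abel
    rw [← e2]
  -- (3) → (1)
  have h31 : (∃ (A₁ : Matrix (Fin m) (Fin m) ℝ) (A₂ : Matrix (Fin n) (Fin n) ℝ),
        dualMat A A₀ = dualMat 1 A₁ * dualMat A 0 * dualMat 1 A₂) →
      (∃ Xh : Matrix (Fin n) (Fin m) (DualNumber ℝ),
        dualMat A A₀ * Xh * dualMat A A₀ = dualMat A A₀) := by
    rintro ⟨A₁, A₂, hE⟩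
    have hA0 : A₀ = A₁ * A + A * A₂ := hM A₁ A₂ hE
    refine ⟨dualMat Ap (-(A₂ * Ap) - Ap * A₁), ?_⟩
    rw [dualMat_mul, dualMat_mul]
    have c2 : A * Ap * A₀ + (A * (-(A₂ * Ap) - Ap * A₁) + A₀ * Ap) * A = A₀ := by
      rw [hA0]
      simp only [Matrix.mul_add, Matrix.add_mul, Matrix.mul_sub, Matrix.sub_mul, Matrix.neg_mul, Matrix.mul_neg, Matrix.mul_assoc, haux, h3]
      abel
    rw [hA1, c2]
  exact ⟨⟨h12, fun h2 => h31 (h23 h2)⟩, ⟨fun h1 => h23 (h12 h1), h31⟩, hM⟩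
end

section
/- Let Â ∈ 𝔻^{m×n}, B̂ ∈ 𝔻^{n×s}, Ĉ ∈ 𝔻^{t×m} be dual matrices. (i) A dual matrix X̂ ∈ 𝔻^{n×m} satisfying X̂·Â·X̂ = X̂, ℛ(X̂) = ℛ(B̂) and 𝒩(X̂) = 𝒩(Ĉ) is unique when it exists (denoted Â^{(2)}_{ℛ(B̂),𝒩(Ĉ)}). (ii) The (B̂,Ĉ)-inverse Â^{‖(B̂,Ĉ)} exists if and only if Â^{(2)}_{ℛ(B̂),𝒩(Ĉ)} exists, and in this case Â^{(2)}_{ℛ(B̂),𝒩(Ĉ)} = Â^{‖(B̂,Ĉ)}. -/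
/-!
Range inclusion `ℛ(P) ⊆ ℛ(Q)` gives a factorization `P = Q U` over any commutative ring, and
dually `𝒩(C) ⊆ 𝒩(X)` gives `X = Y C` over a self-injective ring; the dual numbers are
self-injective by Baer's criterion, their only ideals being `0`, `(ε)` and the whole ring.
With both factorizations, an outer inverse `X A X = X` with `ℛ(X) = ℛ(B)` and `𝒩(X) = 𝒩(C)`
satisfies exactly the `(B, C)`-inverse equations, and conversely. Two such outer inverses
`X, X'` coincide because `X = X' A X` (same range) and `X' A X = X'` (same null space).
-/

/-- `X` is the (B,C)-inverse of `A` (for rectangular matrices over a ring `α`):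
`C·A·X = C`, `X·A·B = B`, `X = B·Y₁ = Y₂·C` for some `Y₁, Y₂`. -/
def IsBCInvM {α : Type*} [Ring α] {m n s t : ℕ}
    (B : Matrix (Fin n) (Fin s) α) (C : Matrix (Fin t) (Fin m) α)
    (A : Matrix (Fin m) (Fin n) α) (X : Matrix (Fin n) (Fin m) α) : Prop :=
  C * A * X = C ∧ X * A * B = B ∧
    (∃ Y₁ : Matrix (Fin s) (Fin m) α, X = B * Y₁) ∧
    (∃ Y₂ : Matrix (Fin n) (Fin t) α, X = Y₂ * C)

/-- `X` is a {2}-inverse of `Â` with range `ℛ(B̂)` and null space `𝒩(Ĉ)`. -/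
def IsOuterRangeNull {m n s t : ℕ}
    (A : Matrix (Fin m) (Fin n) (DualNumber ℝ))
    (B : Matrix (Fin n) (Fin s) (DualNumber ℝ))
    (C : Matrix (Fin t) (Fin m) (DualNumber ℝ))
    (X : Matrix (Fin n) (Fin m) (DualNumber ℝ)) : Prop :=
  X * A * X = X ∧
  {v : Fin n → DualNumber ℝ | ∃ α, v = X.mulVec α} =
    {v : Fin n → DualNumber ℝ | ∃ α, v = B.mulVec α} ∧
  {β : Fin m → DualNumber ℝ | X.mulVec β = 0} =
    {β : Fin m → DualNumber ℝ | C.mulVec β = 0}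

open TrivSqZeroExt

namespace DualNumber

variable {K : Type*} [Field K]

theorem baer_self : Module.Baer K[ε] K[ε] := by
  intro I g
  by_cases hunit : ∃ x ∈ I, fst x ≠ 0
  · obtain ⟨x, hxI, hx⟩ := hunit
    have one_mem : (1 : K[ε]) ∈ I := I.eq_top_of_isUnit_mem hxI
      (isUnit_iff_isUnit_fst.mpr hx.isUnit) ▸ Submodule.mem_top
    refine ⟨LinearMap.toSpanSingleton _ _ (g ⟨1, one_mem⟩), fun y hy => ?_⟩
    simpa using (map_smul g y ⟨1, one_mem⟩).symm
  push Not at hunit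
  by_cases hzero : ∃ x ∈ I, x ≠ 0
  · obtain ⟨x, hxI, hx0⟩ := hzero
    have hxfst : fst x = 0 := hunit x hxI
    have hxsnd : snd x ≠ 0 := fun h => hx0 (TrivSqZeroExt.ext hxfst h)
    set c := g ⟨x, hxI⟩ with hc
    -- `x * x = 0`, so `x * c = g (x * x) = 0`, which forces `fst c = 0`.
    have hcfst : fst c = 0 := by
      have hxx : x • (⟨x, hxI⟩ : I) = 0 := by
        ext1
        ext <;> simp [hxfst]
      have hxc : x * c = 0 := by rw [← smul_eq_mul, ← map_smul, hxx, map_zero]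
      simpa [hxsnd, hxfst] using congrArg snd hxc
    refine ⟨LinearMap.toSpanSingleton _ _ (inl (snd c / snd x)), fun y hy => ?_⟩
    have hyfst : fst y = 0 := hunit y hy
    have hy : (⟨y, hy⟩ : I) = (inl (snd y / snd x) : K[ε]) • ⟨x, hxI⟩ := by
      ext1
      ext <;> simp [hxfst, hyfst, hxsnd]
    rw [hy, map_smul, ← hc]
    ext <;> simp [hyfst, hcfst]
    ring
  push Not at hzero
  refine ⟨0, fun y hy => ?_⟩
  obtain rfl := hzero y hy
  exact (map_zero g).symm

instance : Module.Injective K[ε] K[ε] := baer_self.injective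

end DualNumber

universe u

namespace LinearMap

variable {R M N : Type*} {Q : Type u} [Ring R] [AddCommGroup M] [Module R M] [AddCommGroup N]
  [Module R N] [AddCommGroup Q] [Module R Q]

theorem exists_comp_eq_of_range_le [Module.Projective R M] (f : N →ₗ[R] Q) (g : M →ₗ[R] Q)
    (h : range g ≤ range f) : ∃ e : M →ₗ[R] N, f ∘ₗ e = g := by
  obtain ⟨e, he⟩ := Module.projective_lifting_property f.rangeRestrict
    (g.codRestrict (range f) fun x => h (mem_range_self g x)) f.surjective_rangeRestrict
  refine ⟨e, ext fun x => ?_⟩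
  simpa using congr(Subtype.val ($he x))

theorem exists_comp_eq_of_ker_le [Small.{u} R] [Module.Injective R Q] (f : M →ₗ[R] N)
    (g : M →ₗ[R] Q) (h : ker f ≤ ker g) : ∃ e : N →ₗ[R] Q, e ∘ₗ f = g := by
  obtain ⟨e, he⟩ := Module.Injective.extension_property R Q _ _ ((ker f).liftQ f le_rfl)
    (ker_eq_bot.mp ((ker f).ker_liftQ_eq_bot f le_rfl le_rfl)) ((ker f).liftQ g h)
  refine ⟨e, ?_⟩
  rw [← (ker f).liftQ_mkQ f le_rfl, ← comp_assoc, he, Submodule.liftQ_mkQ]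

end LinearMap

namespace Matrix

variable {R : Type u} [CommRing R] {l m n : Type*} [Fintype m] [Fintype n]

theorem exists_eq_mul_of_range_le [DecidableEq n] {P : Matrix l n R} {Q : Matrix l m R}
    (h : LinearMap.range P.mulVecLin ≤ LinearMap.range Q.mulVecLin) :
    ∃ U : Matrix m n R, P = Q * U := by
  obtain ⟨e, he⟩ := LinearMap.exists_comp_eq_of_range_le _ _ h
  refine ⟨LinearMap.toMatrix' e, toLin'.injective ?_⟩
  rw [toLin'_apply', toLin'_apply', mulVecLin_mul, ← toLin'_apply' (LinearMap.toMatrix' e),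
    toLin'_toMatrix', he]

theorem exists_eq_mul_of_ker_le [DecidableEq m] [DecidableEq n] [Module.Injective R R]
    {X : Matrix l n R} {C : Matrix m n R}
    (h : LinearMap.ker C.mulVecLin ≤ LinearMap.ker X.mulVecLin) :
    ∃ Y : Matrix l m R, X = Y * C := by
  obtain ⟨e, he⟩ := LinearMap.exists_comp_eq_of_ker_le _ _ h
  refine ⟨LinearMap.toMatrix' e, toLin'.injective ?_⟩
  rw [toLin'_mul, toLin'_toMatrix', toLin'_apply', toLin'_apply', he]

theorem range_mulVecLin_mul_le (P : Matrix l m R) (Q : Matrix m n R) :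
    LinearMap.range (P * Q).mulVecLin ≤ LinearMap.range P.mulVecLin := by
  rw [mulVecLin_mul]
  exact LinearMap.range_comp_le_range _ _

theorem ker_mulVecLin_le_mul (P : Matrix l m R) (Q : Matrix m n R) :
    LinearMap.ker Q.mulVecLin ≤ LinearMap.ker (P * Q).mulVecLin := by
  rw [mulVecLin_mul]
  exact LinearMap.ker_le_ker_comp _ _

variable {k : Type*} {X : Matrix n m R} {A : Matrix m n R}

theorem mul_mul_eq_of_range_le [Fintype k] [DecidableEq k] {Z : Matrix n k R}
    (hX : X * A * X = X) (h : LinearMap.range Z.mulVecLin ≤ LinearMap.range X.mulVecLin) :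
    X * A * Z = Z := by
  obtain ⟨U, rfl⟩ := exists_eq_mul_of_range_le h
  rw [← Matrix.mul_assoc, hX]

theorem mul_mul_eq_of_ker_le [DecidableEq m] {Z : Matrix k m R} (hX : X * A * X = X)
    (h : LinearMap.ker X.mulVecLin ≤ LinearMap.ker Z.mulVecLin) : Z * A * X = Z := by
  refine toLin'.injective (LinearMap.ext fun v => ?_)
  have hv : A *ᵥ X *ᵥ v - v ∈ LinearMap.ker X.mulVecLin := by
    simp only [LinearMap.mem_ker, mulVecLin_apply, mulVec_sub, mulVec_mulVec, ← Matrix.mul_assoc,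
      hX, sub_self]
  have hZ := h hv
  simp only [LinearMap.mem_ker, mulVecLin_apply, mulVec_sub, mulVec_mulVec, ← Matrix.mul_assoc,
    sub_eq_zero] at hZ
  simpa using hZ

end Matrix

open Matrix LinearMap

section DualMatrix

variable {m n s t : ℕ} {A : Matrix (Fin m) (Fin n) (DualNumber ℝ)}
  {B : Matrix (Fin n) (Fin s) (DualNumber ℝ)} {C : Matrix (Fin t) (Fin m) (DualNumber ℝ)}
  {X : Matrix (Fin n) (Fin m) (DualNumber ℝ)}

theorem isOuterRangeNull_iff : IsOuterRangeNull A B C X ↔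
    X * A * X = X ∧ range X.mulVecLin = range B.mulVecLin ∧
      ker X.mulVecLin = ker C.mulVecLin := by
  have hrange {k : ℕ} (M : Matrix (Fin n) (Fin k) (DualNumber ℝ)) :
      {v | ∃ α, v = M *ᵥ α} = (range M.mulVecLin : Set _) := by
    ext; simp [eq_comm]
  have hker {k : ℕ} (M : Matrix (Fin k) (Fin m) (DualNumber ℝ)) :
      {β | M *ᵥ β = 0} = (ker M.mulVecLin : Set _) := rfl
  simp only [IsOuterRangeNull, hrange, hker, SetLike.coe_set_eq]

theorem IsBCInvM.isOuterRangeNull (h : IsBCInvM B C A X) : IsOuterRangeNull A B C X := by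
  obtain ⟨hC, hB, ⟨Y₁, hY₁⟩, ⟨Y₂, hY₂⟩⟩ := h
  have hB' : B = X * (A * B) := by rw [← Matrix.mul_assoc, hB]
  refine isOuterRangeNull_iff.mpr ⟨?_, ?_, ?_⟩
  · nth_rewrite 2 [hY₁]
    rw [← Matrix.mul_assoc, hB, ← hY₁]
  · exact le_antisymm (hY₁ ▸ range_mulVecLin_mul_le B Y₁)
      (hB' ▸ range_mulVecLin_mul_le X (A * B))
  · exact le_antisymm (hC ▸ ker_mulVecLin_le_mul (C * A) X)
      (hY₂ ▸ ker_mulVecLin_le_mul Y₂ C)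

theorem IsOuterRangeNull.isBCInvM (h : IsOuterRangeNull A B C X) : IsBCInvM B C A X := by
  obtain ⟨hX, hR, hN⟩ := isOuterRangeNull_iff.mp h
  exact ⟨mul_mul_eq_of_ker_le hX hN.le, mul_mul_eq_of_range_le hX hR.ge,
    exists_eq_mul_of_range_le hR.le, exists_eq_mul_of_ker_le hN.ge⟩

theorem IsOuterRangeNull.unique {X' : Matrix (Fin n) (Fin m) (DualNumber ℝ)}
    (h : IsOuterRangeNull A B C X) (h' : IsOuterRangeNull A B C X') : X = X' := by
  obtain ⟨hX, hR, hN⟩ := isOuterRangeNull_iff.mp h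
  obtain ⟨hX', hR', hN'⟩ := isOuterRangeNull_iff.mp h'
  calc X = X' * A * X := (mul_mul_eq_of_range_le hX' (hR.trans hR'.symm).le).symm
    _ = X' := mul_mul_eq_of_ker_le hX (hN.trans hN'.symm).le

end DualMatrix

/-- (i) a dual matrix `X̂` with `X̂ Â X̂ = X̂`, `ℛ(X̂) = ℛ(B̂)` and
`𝒩(X̂) = 𝒩(Ĉ)` is unique when it exists; (ii) `Â^{‖(B̂,Ĉ)}` exists iff
`Â^{(2)}_{ℛ(B̂),𝒩(Ĉ)}` exists, and then they coincide. -/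
theorem stmt18 {m n s t : ℕ}
    (A : Matrix (Fin m) (Fin n) (DualNumber ℝ))
    (B : Matrix (Fin n) (Fin s) (DualNumber ℝ))
    (C : Matrix (Fin t) (Fin m) (DualNumber ℝ)) :
    (∀ X₁ X₂ : Matrix (Fin n) (Fin m) (DualNumber ℝ),
      IsOuterRangeNull A B C X₁ → IsOuterRangeNull A B C X₂ → X₁ = X₂) ∧
    ((∃ X, IsBCInvM B C A X) ↔ (∃ X, IsOuterRangeNull A B C X)) ∧
    (∀ X Y : Matrix (Fin n) (Fin m) (DualNumber ℝ),
      IsOuterRangeNull A B C X → IsBCInvM B C A Y → X = Y) :=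
  ⟨fun _ _ h₁ h₂ => h₁.unique h₂,
    ⟨fun ⟨X, hX⟩ => ⟨X, hX.isOuterRangeNull⟩, fun ⟨X, hX⟩ => ⟨X, hX.isBCInvM⟩⟩,
    fun _ _ hX hY => hX.unique hY.isOuterRangeNull⟩
end

section
/- Let Â = A + εA₀ ∈ 𝔻^{n×n} be a square dual matrix and let k be the Drazin index of the real matrix A. Then Â^{2k} = A^{2k} + ε(Σ_{i=0}^{2k−1} Aⁱ·A₀·A^{2k−1−i}) is regular in the ring 𝔻^{n×n}, and Â is Drazin invertible with Drazin index i(Â) ≤ 2k. In particular, every square dual matrix has a Drazin inverse. -/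
/-- `x` is a Drazin inverse of `a` with exponent `k`:
`a x² = x`, `x a = a x`, `x a^{k+1} = a^k`. -/
def IsDrazinInverse {R : Type*} [Ring R] (a x : R) (k : ℕ) : Prop :=
  a * (x * x) = x ∧ x * a = a * x ∧ x * a ^ (k + 1) = a ^ k

/-!
If `x` is a Drazin inverse of `a` with index `k` and `p = 1 - a x` is the associated spectral
idempotent, then `a + ε b` has the Drazin inverse `x + ε z` with index at most `2 k`, where
`z = - x b x + ∑_{i<k} x^{i+2} b a^i p + ∑_{i<k} p a^i b x^{i+2}`.
Comparing ε-parts, the three Drazin equations for `x + ε z` become identities in the base ring.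
The two sums telescope against `a`, since `a x^{i+2} = x^{i+1}` and `p a^k = a^k p = 0`, and
`x^{i+2} a^{N+1} = a^{N-1-i}` for all `i < k` as soon as `N ≥ 2 k`, which is where the bound
on the index comes from. Matrices over dual numbers are dual numbers over matrices, so the
argument runs in `DualNumber R` for an arbitrary ring `R`. Regularity of `Â^{2k}` holds because
`a^m x^m a^m = a^m` for every Drazin inverse `x` of index `m`.
-/

open Finset TrivSqZeroExt

namespace IsDrazinInverse

variable {R : Type*} [Ring R] {a x : R} {k : ℕ}

theorem commute (h : IsDrazinInverse a x k) : Commute a x := h.2.1.symm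

theorem mul_pow_succ_of_le (h : IsDrazinInverse a x k) {j : ℕ} (hj : k ≤ j) :
    x * a ^ (j + 1) = a ^ j := by
  obtain ⟨m, rfl⟩ := Nat.exists_eq_add_of_le hj
  clear hj
  induction m with
  | zero => exact h.2.2
  | succ m ih =>
    rw [← add_assoc, pow_succ', ← mul_assoc, ← h.commute.eq, mul_assoc, ih, ← pow_succ']

theorem pow_mul_pow_of_le (h : IsDrazinInverse a x k) {j m : ℕ} (hjm : k + j ≤ m) :
    x ^ j * a ^ m = a ^ (m - j) := by
  induction j generalizing m with
  | zero => simp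
  | succ j ih =>
    obtain ⟨m, rfl⟩ : ∃ m', m = m' + 1 := ⟨m - 1, by omega⟩
    rw [pow_succ, mul_assoc, h.mul_pow_succ_of_le (by omega), ih (by omega)]
    congr 1
    omega

theorem mul_pow_add_two (h : IsDrazinInverse a x k) (j : ℕ) :
    a * x ^ (j + 2) = x ^ (j + 1) := by
  rw [pow_add, sq, ← mul_assoc, (h.commute.pow_right j).eq, mul_assoc, h.1, ← pow_succ]

theorem mul_one_sub (h : IsDrazinInverse a x k) : x * (1 - a * x) = 0 := by
  rw [mul_sub, mul_one, ← mul_assoc, ← h.commute.eq, mul_assoc, h.1, sub_self]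

theorem one_sub_mul (h : IsDrazinInverse a x k) : (1 - a * x) * x = 0 := by
  rw [sub_mul, one_mul, mul_assoc, h.1, sub_self]

theorem one_sub_mul_pow_of_le (h : IsDrazinInverse a x k) {j : ℕ} (hj : k ≤ j) :
    (1 - a * x) * a ^ j = 0 := by
  rw [sub_mul, one_mul, h.commute.eq, mul_assoc, ← pow_succ', h.mul_pow_succ_of_le hj, sub_self]

theorem commute_one_sub (h : IsDrazinInverse a x k) : Commute a (1 - a * x) :=
  (Commute.one_right a).sub_right ((Commute.refl a).mul_right h.commute)

theorem pow_mul_one_sub_of_le (h : IsDrazinInverse a x k) {j : ℕ} (hj : k ≤ j) :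
    a ^ j * (1 - a * x) = 0 := by
  rw [(h.commute_one_sub.pow_left j).eq, h.one_sub_mul_pow_of_le hj]

theorem mul_mul_pow_add_one (h : IsDrazinInverse a x k) (j : ℕ) :
    a * x * x ^ (j + 1) = x ^ (j + 1) := by
  rw [mul_assoc, ← pow_succ', h.mul_pow_add_two]

theorem pow_add_one_mul_mul (h : IsDrazinInverse a x k) (j : ℕ) :
    x ^ (j + 1) * (a * x) = x ^ (j + 1) := by
  rw [← ((h.commute.mul_left (Commute.refl x)).pow_right (j + 1)).eq, h.mul_mul_pow_add_one]

theorem pow_add_two_mul (h : IsDrazinInverse a x k) (j : ℕ) : x ^ (j + 2) * a = x ^ (j + 1) := by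
  rw [← (h.commute.pow_right (j + 2)).eq, h.mul_pow_add_two]

theorem pow_mul_pow_mul_pow (h : IsDrazinInverse a x k) : a ^ k * x ^ k * a ^ k = a ^ k := by
  rw [(h.commute.pow_pow k k).eq, mul_assoc, ← pow_add, h.pow_mul_pow_of_le le_rfl,
    Nat.add_sub_cancel]

theorem map {S F : Type*} [Ring S] [FunLike F R S] [RingHomClass F R S] (h : IsDrazinInverse a x k)
    (f : F) : IsDrazinInverse (f a) (f x) k := by
  obtain ⟨h₁, h₂, h₃⟩ := h
  refine ⟨?_, ?_, ?_⟩ <;> simp only [← map_mul, ← map_pow, h₁, h₂, h₃]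

end IsDrazinInverse

section DualDrazin

variable {R : Type*} [Ring R]

def drazinDualLeft (a x b : R) (k : ℕ) : R :=
  ∑ i ∈ range k, x ^ (i + 2) * b * a ^ i * (1 - a * x)

def drazinDualRight (a x b : R) (k : ℕ) : R :=
  ∑ i ∈ range k, (1 - a * x) * a ^ i * b * x ^ (i + 2)

def drazinDual (a x b : R) (k : ℕ) : R :=
  -(x * b * x) + drazinDualLeft a x b k + drazinDualRight a x b k

end DualDrazin

namespace IsDrazinInverse

variable {R : Type*} [Ring R] {a x : R} {k : ℕ} (b : R)

theorem mul_mul_drazinDualLeft (h : IsDrazinInverse a x k) :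
    a * x * drazinDualLeft a x b k = drazinDualLeft a x b k := by
  simp only [drazinDualLeft, mul_sum, ← mul_assoc, h.mul_mul_pow_add_one]

theorem drazinDualLeft_mul (h : IsDrazinInverse a x k) : drazinDualLeft a x b k * x = 0 := by
  simp only [drazinDualLeft, sum_mul, mul_assoc _ (1 - a * x), h.one_sub_mul, mul_zero,
    sum_const_zero]

theorem mul_drazinDualRight (h : IsDrazinInverse a x k) : x * drazinDualRight a x b k = 0 := by
  simp only [drazinDualRight, mul_sum, ← mul_assoc, h.mul_one_sub, zero_mul, sum_const_zero]

theorem drazinDualRight_mul_mul (h : IsDrazinInverse a x k) :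
    drazinDualRight a x b k * (a * x) = drazinDualRight a x b k := by
  simp only [drazinDualRight, sum_mul, mul_assoc _ (x ^ _), h.pow_add_one_mul_mul]

theorem drazinDualLeft_mul_sub_mul_drazinDualLeft (h : IsDrazinInverse a x k) :
    drazinDualLeft a x b k * a - a * drazinDualLeft a x b k = -(x * b * (1 - a * x)) := by
  set f : ℕ → R := fun i ↦ x ^ (i + 1) * b * a ^ i * (1 - a * x)
  calc drazinDualLeft a x b k * a - a * drazinDualLeft a x b k
      = ∑ i ∈ range k, (f (i + 1) - f i) := by
        rw [drazinDualLeft, sum_mul, mul_sum, ← sum_sub_distrib]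
        refine sum_congr rfl fun i _ ↦ ?_
        rw [mul_assoc _ (1 - a * x) a, ← h.commute_one_sub.eq, ← mul_assoc,
          mul_assoc _ (a ^ i) a, ← pow_succ]
        simp only [f, ← mul_assoc, h.mul_pow_add_two]
    _ = -(x * b * (1 - a * x)) := by
        rw [sum_range_sub]
        simp [f, mul_assoc _ (a ^ k), h.pow_mul_one_sub_of_le le_rfl]

theorem mul_drazinDualRight_sub_drazinDualRight_mul (h : IsDrazinInverse a x k) :
    a * drazinDualRight a x b k - drazinDualRight a x b k * a = -((1 - a * x) * b * x) := by
  set g : ℕ → R := fun i ↦ (1 - a * x) * a ^ i * b * x ^ (i + 1)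
  calc a * drazinDualRight a x b k - drazinDualRight a x b k * a
      = ∑ i ∈ range k, (g (i + 1) - g i) := by
        rw [drazinDualRight, sum_mul, mul_sum, ← sum_sub_distrib]
        refine sum_congr rfl fun i _ ↦ ?_
        rw [← mul_assoc, ← mul_assoc, ← mul_assoc, h.commute_one_sub.eq, mul_assoc _ a,
          ← pow_succ', mul_assoc _ _ a, h.pow_add_two_mul]
    _ = -((1 - a * x) * b * x) := by
        rw [sum_range_sub]
        simp [g, h.one_sub_mul_pow_of_le le_rfl]

theorem mul_mul_drazinDual_add (h : IsDrazinInverse a x k) :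
    a * (x * drazinDual a x b k + drazinDual a x b k * x) + b * (x * x) = drazinDual a x b k := by
  set U := drazinDualLeft a x b k
  set V := drazinDualRight a x b k
  have hxz : a * (x * drazinDual a x b k) = -(x * b * x) + U := by
    calc a * (x * drazinDual a x b k) = -(a * (x * x) * b * x) + a * x * U + a * (x * V) := by
          simp only [drazinDual, U, V]; noncomm_ring
      _ = -(x * b * x) + U := by
          rw [h.1, h.mul_mul_drazinDualLeft, h.mul_drazinDualRight, mul_zero, add_zero]
  have hzx : a * (drazinDual a x b k * x) = V - b * (x * x) := by
    calc a * (drazinDual a x b k * x) = -(a * x * b * (x * x)) + a * (U * x) + (a * V) * x := by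
          simp only [drazinDual, U, V]; noncomm_ring
      _ = -(a * x * b * (x * x)) + (-((1 - a * x) * b * x) + V * a) * x := by
          rw [h.drazinDualLeft_mul, mul_zero, add_zero,
            sub_eq_iff_eq_add.mp (h.mul_drazinDualRight_sub_drazinDualRight_mul b)]
      _ = V - b * (x * x) := by
          rw [add_mul, mul_assoc V, h.drazinDualRight_mul_mul]; noncomm_ring
  rw [mul_add, hxz, hzx, drazinDual]
  abel

theorem mul_add_drazinDual_mul (h : IsDrazinInverse a x k) :
    x * b + drazinDual a x b k * a = a * drazinDual a x b k + b * x := by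
  have hU := h.drazinDualLeft_mul_sub_mul_drazinDualLeft b
  have hV := h.mul_drazinDualRight_sub_drazinDualRight_mul b
  rw [← sub_eq_zero]
  calc x * b + drazinDual a x b k * a - (a * drazinDual a x b k + b * x)
      = x * b - x * b * (x * a) + a * x * b * x - b * x
        + (drazinDualLeft a x b k * a - a * drazinDualLeft a x b k)
        - (a * drazinDualRight a x b k - drazinDualRight a x b k * a) := by
        simp only [drazinDual]; noncomm_ring
    _ = 0 := by rw [hU, hV, h.2.1]; noncomm_ring

theorem drazinDualLeft_mul_pow_of_le (h : IsDrazinInverse a x k) {j : ℕ} (hj : k ≤ j) :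
    drazinDualLeft a x b k * a ^ j = 0 := by
  simp only [drazinDualLeft, sum_mul, mul_assoc _ (1 - a * x), h.one_sub_mul_pow_of_le hj,
    mul_zero, sum_const_zero]

theorem drazinDualRight_mul_pow_succ (h : IsDrazinInverse a x k) {N : ℕ} (hN : 2 * k ≤ N) :
    drazinDualRight a x b k * a ^ (N + 1) =
      ∑ i ∈ range k, (1 - a * x) * a ^ i * b * a ^ (N - 1 - i) := by
  rw [drazinDualRight, sum_mul]
  refine sum_congr rfl fun i hi ↦ ?_
  rw [mem_range] at hi
  rw [mul_assoc _ (x ^ _), h.pow_mul_pow_of_le (by omega)]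
  congr 2
  omega

theorem sum_pow_mul_mul_pow (h : IsDrazinInverse a x k) {N : ℕ} (hN : k ≤ N) :
    ∑ i ∈ range N, a ^ i * b * a ^ (N - 1 - i) =
      ∑ i ∈ range N, x * a ^ (i + 1) * b * a ^ (N - 1 - i) +
        ∑ i ∈ range k, (1 - a * x) * a ^ i * b * a ^ (N - 1 - i) := by
  rw [sum_subset (range_subset_range.2 hN) fun i _ hi ↦ by
    rw [h.one_sub_mul_pow_of_le (by simpa using hi), zero_mul, zero_mul], ← sum_add_distrib]
  refine sum_congr rfl fun i _ ↦ ?_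
  rw [pow_succ', ← mul_assoc, h.2.1]
  noncomm_ring

theorem mul_sum_add_drazinDual_mul_pow (h : IsDrazinInverse a x k) {N : ℕ} (hN : 2 * k ≤ N) :
    x * ∑ i ∈ range (N + 1), a ^ i * b * a ^ (N - i) + drazinDual a x b k * a ^ (N + 1) =
      ∑ i ∈ range N, a ^ i * b * a ^ (N - 1 - i) := by
  have hx : x * ∑ i ∈ range (N + 1), a ^ i * b * a ^ (N - i) =
      ∑ i ∈ range N, x * a ^ (i + 1) * b * a ^ (N - 1 - i) + x * b * a ^ N := by
    rw [sum_range_succ', mul_add, mul_sum]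
    congr 1
    · refine sum_congr rfl fun i _ ↦ ?_
      rw [show N - (i + 1) = N - 1 - i by omega]
      simp only [mul_assoc]
    · simp only [pow_zero, one_mul, Nat.sub_zero, mul_assoc]
  have hz : drazinDual a x b k * a ^ (N + 1) =
      -(x * b * a ^ N) + ∑ i ∈ range k, (1 - a * x) * a ^ i * b * a ^ (N - 1 - i) := by
    rw [drazinDual, add_mul, add_mul, h.drazinDualLeft_mul_pow_of_le b (by omega),
      h.drazinDualRight_mul_pow_succ b hN, neg_mul, mul_assoc (x * b),
      h.mul_pow_succ_of_le (by omega), add_zero]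
  rw [hx, hz, h.sum_pow_mul_mul_pow b (by omega)]
  abel

end IsDrazinInverse

theorem DualNumber.snd_pow_eq_sum_range {R : Type*} [Semiring R] (p : DualNumber R) (N : ℕ) :
    (p ^ N).snd = ∑ i ∈ range N, p.fst ^ i * p.snd * p.fst ^ (N - 1 - i) := by
  induction N with
  | zero => simp
  | succ N ih =>
    rw [pow_succ, DualNumber.snd_mul, ih, TrivSqZeroExt.fst_pow, sum_mul, sum_range_succ,
      Nat.add_sub_cancel, Nat.sub_self, pow_zero, mul_one, add_comm]
    congr 1
    refine sum_congr rfl fun i hi ↦ ?_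
    rw [mem_range] at hi
    rw [mul_assoc _ _ p.fst, ← pow_succ]
    congr 2
    omega

theorem IsDrazinInverse.dualNumber {R : Type*} [Ring R] {a x : R} {k : ℕ}
    (h : IsDrazinInverse a x k) (b : R) :
    IsDrazinInverse (inl a + inr b : DualNumber R) (inl x + inr (drazinDual a x b k)) (2 * k) := by
  refine ⟨TrivSqZeroExt.ext (by simpa using h.1) ?_, TrivSqZeroExt.ext (by simpa using h.2.1) ?_,
    TrivSqZeroExt.ext (by simpa using h.mul_pow_succ_of_le (by omega)) ?_⟩
  · simpa [DualNumber.snd_mul] using h.mul_mul_drazinDual_add b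
  · simpa [DualNumber.snd_mul] using h.mul_add_drazinDual_mul b
  · simpa [DualNumber.snd_mul, DualNumber.snd_pow_eq_sum_range] using
      h.mul_sum_add_drazinDual_mul_pow b le_rfl

section DualMatrix

variable {n : ℕ}

theorem dualNumberEquiv_dualMat (A A₀ : Matrix (Fin n) (Fin n) ℝ) :
    Matrix.dualNumberEquiv (dualMat A A₀) = inl A + inr A₀ := by
  ext <;> simp [dualMat]

theorem dualMat_pow (A A₀ : Matrix (Fin n) (Fin n) ℝ) (N : ℕ) :
    dualMat A A₀ ^ N = dualMat (A ^ N) (∑ i ∈ range N, A ^ i * A₀ * A ^ (N - 1 - i)) := by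
  apply Matrix.dualNumberEquiv.injective
  rw [map_pow, dualNumberEquiv_dualMat, dualNumberEquiv_dualMat]
  ext1
  · simp
  · simp [DualNumber.snd_pow_eq_sum_range]

end DualMatrix

theorem stmt19_general {n : ℕ} (A A₀ : Matrix (Fin n) (Fin n) ℝ) (k : ℕ)
    (hk : ∃ X, IsDrazinInverse A X k) :
    (dualMat A A₀) ^ (2 * k) =
      dualMat (A ^ (2 * k))
        (∑ i ∈ Finset.range (2 * k), A ^ i * A₀ * A ^ (2 * k - 1 - i)) ∧
    (∃ Y, (dualMat A A₀) ^ (2 * k) * Y * (dualMat A A₀) ^ (2 * k)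
        = (dualMat A A₀) ^ (2 * k)) ∧
    (∃ X, IsDrazinInverse (dualMat A A₀) X (2 * k)) ∧
    (∃ X m, IsDrazinInverse (dualMat A A₀) X m) := by
  obtain ⟨X, hX⟩ := hk
  have hD := (hX.dualNumber A₀).map Matrix.dualNumberEquiv.symm
  rw [← dualNumberEquiv_dualMat, AlgEquiv.symm_apply_apply] at hD
  exact ⟨dualMat_pow A A₀ (2 * k), ⟨_, hD.pow_mul_pow_mul_pow⟩, ⟨_, hD⟩, ⟨_, _, hD⟩⟩

/-- if `k` is the Drazin index of the real matrix `A`, then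
`Â^{2k} = A^{2k} + ε (Σ_{i=0}^{2k-1} Aⁱ A₀ A^{2k-1-i})` is regular in `𝔻^{n×n}` and
`Â = A + ε A₀` is Drazin invertible with Drazin index at most `2k`; in particular every
square dual matrix is Drazin invertible. -/
theorem stmt19 {n : ℕ} (A A₀ : Matrix (Fin n) (Fin n) ℝ) (k : ℕ)
    (hk : ∃ X, IsDrazinInverse A X k)
    (hmin : ∀ m : ℕ, (∃ X, IsDrazinInverse A X m) → k ≤ m) :
    (dualMat A A₀) ^ (2 * k) =
      dualMat (A ^ (2 * k))
        (∑ i ∈ Finset.range (2 * k), A ^ i * A₀ * A ^ (2 * k - 1 - i)) ∧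
    (∃ Y, (dualMat A A₀) ^ (2 * k) * Y * (dualMat A A₀) ^ (2 * k)
        = (dualMat A A₀) ^ (2 * k)) ∧
    (∃ X, IsDrazinInverse (dualMat A A₀) X (2 * k)) ∧
    (∃ X m, IsDrazinInverse (dualMat A A₀) X m) :=
  stmt19_general A A₀ k hk
end
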